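/- In the gap-rule setting, for each A ∈ G_m^-: (i) r_A and β^A are, respectively, the optimal value and the optimal solution of: maximize Σ_{k∈A} θ_k over θ ∈ ℝ^d subject to Λ(θ) ≤ 0, Σ_{i∈[d]} θ_i = 0, θ_k ≥ 0 for k ∈ A, and θ_{k'} ≤ 0 for k' ∉ A. (ii) For each γ ∈ ℝ^d with Λ(γ) ≤ 0, v_A(γ) is bounded below by the optimal value of: maximize Σ_{k∈A} θ_k over θ ∈ ℝ^d subject to Λ(θ − γ) ≤ 0, Σ_{i∈[d]} θ_i = 0, θ_k ≥ 0 for k ∈ A, and θ_{k'} ≤ 0 for k' ∉ A. -/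

import Mathlib

open MeasureTheory ProbabilityTheory Filter Set Topology
open scoped ENNReal Pointwise RealInnerProductSpace Classical

noncomputable section

namespace Paper

abbrev Vec (d : ℕ) := EuclideanSpace ℝ (Fin d)

variable {d : ℕ}

/-- The cone generated by a set: `{λ x : λ > 0, x ∈ A}`. -/
def cone (A : Set (Vec d)) : Set (Vec d) := {y | ∃ l : ℝ, 0 < l ∧ ∃ x ∈ A, y = l • x}

variable {Ω : Type*} [MeasurableSpace Ω]

/-- The random walk `S_n = X_0 + ⋯ + X_{n-1}`. -/
def S (X : ℕ → Ω → Vec d) (n : ℕ) (ω : Ω) : Vec d := ∑ i ∈ Finset.range n, X i ω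

/-- The cumulant generating function `Λ(θ) = log E[exp⟪θ, X₁⟫]` (real-valued on its domain). -/
def cgf (P : Measure Ω) (X : ℕ → Ω → Vec d) (θ : Vec d) : ℝ :=
  Real.log (∫ ω, Real.exp ⟪θ, X 0 ω⟫ ∂P)

/-- `θ` belongs to the effective domain of `Λ`. -/
def InDom (P : Measure Ω) (X : ℕ → Ω → Vec d) (θ : Vec d) : Prop :=
  Integrable (fun ω => Real.exp ⟪θ, X 0 ω⟫) P

/-- The effective domain of the Legendre–Fenchel conjugate `Λ*`. -/
def domConj (P : Measure Ω) (X : ℕ → Ω → Vec d) : Set (Vec d) :=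
  {x | BddAbove ((fun θ => ⟪θ, x⟫ - cgf P X θ) '' {θ | InDom P X θ})}

/-- The rate function `I(x) = sup{θ·x : Λ(θ) ≤ 0}`, valued in `[0,∞]`. -/
def rate (P : Measure Ω) (X : ℕ → Ω → Vec d) (x : Vec d) : ℝ≥0∞ :=
  ⨆ θ ∈ {θ : Vec d | InDom P X θ ∧ cgf P X θ ≤ 0}, ENNReal.ofReal ⟪θ, x⟫

/-- `r_W = inf_{x ∈ W} I(x)`. -/
def rOf (P : Measure Ω) (X : ℕ → Ω → Vec d) (W : Set (Vec d)) : ℝ≥0∞ :=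
  ⨅ x ∈ W, rate P X x

/-- The first hitting time of `b • W` by the random walk. -/
def hit (X : ℕ → Ω → Vec d) (W : Set (Vec d)) (b : ℝ) (ω : Ω) : ℕ∞ :=
  ⨅ (n : ℕ) (_ : S X n ω ∈ b • W), (n : ℕ∞)

/-- The basic i.i.d. random walk hypotheses. -/
def IIDWalk (P : Measure Ω) (X : ℕ → Ω → Vec d) : Prop :=
  IsProbabilityMeasure P ∧ (∀ n, Measurable (X n)) ∧
    iIndepFun X P ∧ ∀ n, P.map (X n) = P.map (X 0)

/-- The exponentially tilted step distribution `μ_θ`. -/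
def tiltedLaw (P : Measure Ω) (X : ℕ → Ω → Vec d) (θ : Vec d) : Measure (Vec d) :=
  (P.map (X 0)).withDensity fun x => ENNReal.ofReal (Real.exp (⟪θ, x⟫ - cgf P X θ))

/-- `Q θ` is, for each `θ ∈ dom Λ`, a probability measure under which the increments
are i.i.d. with the tilted law `μ_θ`, i.e. `Q θ = ℙ_θ`. -/
def IsTiltedFamily (P : Measure Ω) (X : ℕ → Ω → Vec d) (Q : Vec d → Measure Ω) : Prop :=
  ∀ θ : Vec d, InDom P X θ →
    IsProbabilityMeasure (Q θ) ∧
    iIndepFun X (Q θ) ∧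
    ∀ n, (Q θ).map (X n) = tiltedLaw P X θ

/-- The likelihood ratio `L_θ(T) = exp(θ·S_T − T Λ(θ)) 1{T < ∞}`. -/
def LR (P : Measure Ω) (X : ℕ → Ω → Vec d) (θ : Vec d) (T : Ω → ℕ∞) (ω : Ω) : ℝ :=
  if T ω = ⊤ then 0
  else Real.exp (⟪θ, S X (T ω).toNat ω⟫ - ((T ω).toNat : ℝ) * cgf P X θ)

/-- `V_θ(x) = sup{α·x : Λ(θ) + Λ(α−θ) ≤ 0}`, with `sup ∅ = −∞`. -/
def Vfun (P : Measure Ω) (X : ℕ → Ω → Vec d) (θ x : Vec d) : EReal :=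
  ⨆ α ∈ {α : Vec d | InDom P X θ ∧ InDom P X (α - θ) ∧ cgf P X θ + cgf P X (α - θ) ≤ 0},
    ((⟪α, x⟫ : ℝ) : EReal)

/-- `v(W; θ) = inf_{x ∈ cl W} V_θ(x)`. -/
def vOf (P : Measure Ω) (X : ℕ → Ω → Vec d) (W : Set (Vec d)) (θ : Vec d) : EReal :=
  ⨅ x ∈ closure W, Vfun P X θ x

/-- The mixture measure `ℙ_Θ = |Θ|⁻¹ ∑_{θ∈Θ} ℙ_θ`. -/
def mix (Q : Vec d → Measure Ω) (Θ : Finset (Vec d)) : Measure Ω :=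
  (Θ.card : ℝ≥0∞)⁻¹ • ∑ θ ∈ Θ, Q θ

/-- Second moment `E_μ[f²]`. -/
def mom2 (μ : Measure Ω) (f : Ω → ℝ) : ℝ :=
  (∫⁻ ω, ENNReal.ofReal ((f ω) ^ 2) ∂μ).toReal

variable {J : ℕ}

/-- `τ_b^* = min_{j ∈ [J]} τ_b^j`. -/
def tauStar (X : ℕ → Ω → Vec d) (W : Fin J → Set (Vec d)) (b : ℝ) (ω : Ω) : ℕ∞ :=
  ⨅ j, hit X (W j) b ω

/-- The wrong-exit event `{τ_b^* < τ_b^0}`. -/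
def wrongExit (X : ℕ → Ω → Vec d) (W0 : Set (Vec d)) (W : Fin J → Set (Vec d)) (b : ℝ) :
    Set Ω :=
  {ω | tauStar X W b ω < hit X W0 b ω}

/-- The event `{τ_b^* = τ_b^j}`. -/
def exitAt (X : ℕ → Ω → Vec d) (W : Fin J → Set (Vec d)) (j : Fin J) (b : ℝ) : Set Ω :=
  {ω | tauStar X W b ω = hit X (W j) b ω}

/-- The estimator `Ŵ_b^j(θ)`. -/
def WhatJ (P : Measure Ω) (X : ℕ → Ω → Vec d) (W0 : Set (Vec d)) (W : Fin J → Set (Vec d))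
    (θ : Vec d) (j : Fin J) (b : ℝ) : Ω → ℝ :=
  Set.indicator (wrongExit X W0 W b ∩ exitAt X W j b)
    (fun ω => (LR P X θ (tauStar X W b) ω)⁻¹)

/-- The mixture estimator `Ŵ_b(Θ)`. -/
def WhatMix (P : Measure Ω) (X : ℕ → Ω → Vec d) (W0 : Set (Vec d)) (W : Fin J → Set (Vec d))
    (Θ : Finset (Vec d)) (b : ℝ) : Ω → ℝ :=
  Set.indicator (wrongExit X W0 W b)
    (fun ω => ((Θ.card : ℝ)⁻¹ * ∑ θ ∈ Θ, LR P X θ (tauStar X W b) ω)⁻¹)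

/-- Asymptotic efficiency of the proposal `ℙ_Θ` for estimating `ℙ(τ_b^* < τ_b^0)`. -/
def AsympEff (P : Measure Ω) (X : ℕ → Ω → Vec d) (W0 : Set (Vec d))
    (W : Fin J → Set (Vec d)) (Q : Vec d → Measure Ω) (Θ : Finset (Vec d)) : Prop :=
  Tendsto (fun b : ℝ =>
      Real.log (mom2 (mix Q Θ) (WhatMix P X W0 W Θ b)) /
        (2 * Real.log ((P (wrongExit X W0 W b)).toReal)))
    atTop (nhds 1)

/-- Condition (C1). -/
def C1 (P : Measure Ω) (X : ℕ → Ω → Vec d) (W : Fin J → Set (Vec d)) : Prop :=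
  ∃ δ > (0 : ℝ), ∀ j, cone (Metric.ball (∫ ω, X 0 ω ∂P) δ) ∩ W j = ∅

/-- Condition (C2). -/
def C2 (P : Measure Ω) (X : ℕ → Ω → Vec d) (W : Fin J → Set (Vec d)) : Prop :=
  IsOpen {θ : Vec d | InDom P X θ} ∧
    ∀ j, (interior (cone (domConj P X)) ∩ W j).Nonempty

/-- Condition (C3). -/
def C3 (W0 : Set (Vec d)) (W : Fin J → Set (Vec d)) : Prop :=
  (∀ j j', j ≠ j' → cone (W j) ∩ cone (W j') = ∅) ∧
  (∀ j, cone W0 ∩ cone (W j) = ∅) ∧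
  ∃ δ > (0 : ℝ), Metric.ball (0 : Vec d) δ ∩ W0 = ∅ ∧
    ∀ j, Metric.ball (0 : Vec d) δ ∩ W j = ∅

/-- Condition (C4). -/
def C4 (P : Measure Ω) (X : ℕ → Ω → Vec d) (W0 : Set (Vec d))
    (W : Fin J → Set (Vec d)) : Prop :=
  (∀ j j', j ≠ j' → closure (cone (W j)) ∩ closure (cone (W j')) = {0}) ∧
  (W0 = ∅ ∨ ∀ j, closure (cone W0) ∩ closure (cone (W j)) = {0}) ∧
  (W0 = ∅ ∨ (Convex ℝ W0 ∧ (interior (cone (domConj P X)) ∩ W0).Nonempty))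

/-- The sets `W^0, W^1, …, W^J` are open and pairwise disjoint, with `W^1, …, W^J` convex. -/
def GoodSets (W0 : Set (Vec d)) (W : Fin J → Set (Vec d)) : Prop :=
  IsOpen W0 ∧ (∀ j, IsOpen (W j)) ∧ (∀ j, Convex ℝ (W j)) ∧
  (∀ j, Disjoint W0 (W j)) ∧ ∀ j j', j ≠ j' → Disjoint (W j) (W j')

/-- `β` is the optimal tilting associated with the region `Wj` (Definition 3.1). -/
def IsOptTilt (P : Measure Ω) (X : ℕ → Ω → Vec d) (Wj : Set (Vec d)) (β : Vec d) : Prop :=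
  InDom P X β ∧ cgf P X β = 0 ∧
  (∀ v ∈ Wj, ((rOf P X Wj : ℝ≥0∞) : EReal) ≤ ((⟪β, v⟫ : ℝ) : EReal)) ∧
  (∀ x : Vec d, rate P X x ≤ rOf P X Wj →
    ((⟪β, x⟫ : ℝ) : EReal) ≤ ((rOf P X Wj : ℝ≥0∞) : EReal))

/-! ### The gap rule -/

/-- The index set `[m] = {1, …, m}` inside `Fin d`. -/
def Im (d m : ℕ) : Finset (Fin d) := Finset.univ.filter (fun k => (k : ℕ) < m)

/-- The region `W^A = {x : x_k − x_{k'} > 1 for all k ∈ A, k' ∉ A}`. -/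
def WGap (A : Finset (Fin d)) : Set (Vec d) :=
  {x | ∀ k ∈ A, ∀ k' ∉ A, 1 < x k - x k'}

/-- `τ_b^* = min_{A ∈ G_m^-} τ_b^A` for the gap rule. -/
def tauGapStar (X : ℕ → Ω → Vec d) (m : ℕ) (b : ℝ) (ω : Ω) : ℕ∞ :=
  ⨅ (A : Finset (Fin d)) (_ : A.card = m ∧ A ≠ Im d m), hit X (WGap A) b ω

/-- The wrong-exit event `{τ_b^* < τ_b^{[m]}}` for the gap rule. -/
def wrongExitGap (X : ℕ → Ω → Vec d) (m : ℕ) (b : ℝ) : Set Ω :=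
  {ω | tauGapStar X m b ω < hit X (WGap (Im d m)) b ω}

/-- The mixture estimator `Ŵ_b(Θ)` for the gap rule. -/
def WhatGap (P : Measure Ω) (X : ℕ → Ω → Vec d) (m : ℕ) (Θ : Finset (Vec d)) (b : ℝ) :
    Ω → ℝ :=
  Set.indicator (wrongExitGap X m b)
    (fun ω => ((Θ.card : ℝ)⁻¹ * ∑ θ ∈ Θ, LR P X θ (tauGapStar X m b) ω)⁻¹)

/-- Asymptotic efficiency of `ℙ_Θ` for the gap rule. -/
def AsympEffGap (P : Measure Ω) (X : ℕ → Ω → Vec d) (m : ℕ) (Q : Vec d → Measure Ω)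
    (Θ : Finset (Vec d)) : Prop :=
  Tendsto (fun b : ℝ =>
      Real.log (mom2 (mix Q Θ) (WhatGap P X m Θ b)) /
        (2 * Real.log ((P (wrongExitGap X m b)).toReal)))
    atTop (nhds 1)

/-- The standing assumptions for the gap rule. -/
def GapSetting (P : Measure Ω) (X : ℕ → Ω → Vec d) (m : ℕ) : Prop :=
  IIDWalk P X ∧ 2 ≤ m ∧ m + 2 ≤ d ∧
  (∀ k : Fin d, (k : ℕ) < m → 0 < ∫ ω, X 0 ω k ∂P) ∧
  (∀ k : Fin d, m ≤ (k : ℕ) → ∫ ω, X 0 ω k ∂P < 0) ∧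
  IsOpen {θ : Vec d | InDom P X θ} ∧
  ∀ A : Finset (Fin d), A.card = m → A ≠ Im d m →
    (interior (cone (domConj P X)) ∩ WGap A).Nonempty

/-- The feasible set of the optimization problem characterizing `r_A` and `β^A` for the
gap rule. -/
def GapFeas (P : Measure Ω) (X : ℕ → Ω → Vec d) (A : Finset (Fin d)) (θ : Vec d) : Prop :=
  InDom P X θ ∧ cgf P X θ ≤ 0 ∧ (∑ i : Fin d, θ i) = 0 ∧
    (∀ k ∈ A, 0 ≤ θ k) ∧ ∀ k ∉ A, θ k ≤ 0

/-- The feasible set of the two-index problem defining `z̃_{ℓ,ℓ'}` and `γ̃^{ℓ,ℓ'}`. -/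
def GapFeas2 (P : Measure Ω) (X : ℕ → Ω → Vec d) (l l' : Fin d) (θ : Vec d) : Prop :=
  InDom P X θ ∧ cgf P X θ ≤ 0 ∧ θ l + θ l' = 0 ∧ θ l ≤ 0 ∧ 0 ≤ θ l' ∧
    ∀ k, k ≠ l → k ≠ l' → θ k = 0

/-- `zv` and `γ` are the optimal value and a maximizer of the two-index problem. -/
def IsGapOpt2 (P : Measure Ω) (X : ℕ → Ω → Vec d) (l l' : Fin d)
    (zv : ℝ) (γ : Vec d) : Prop :=
  GapFeas2 P X l l' γ ∧ γ l' = zv ∧ ∀ θ, GapFeas2 P X l l' θ → θ l' ≤ zv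

/-- The feasible set of the four-index problem defining `s̃` and its maximizer. -/
def GapFeas4 (P : Measure Ω) (X : ℕ → Ω → Vec d) (l1 l2 l1' l2' : Fin d) (θ : Vec d) :
    Prop :=
  InDom P X θ ∧ cgf P X θ ≤ 0 ∧ θ l1 + θ l2 + θ l1' + θ l2' = 0 ∧
    θ l1 ≤ 0 ∧ θ l2 ≤ 0 ∧ 0 ≤ θ l1' ∧ 0 ≤ θ l2' ∧
    ∀ k, k ≠ l1 → k ≠ l2 → k ≠ l1' → k ≠ l2' → θ k = 0

/-- `sv` and `γ` are the optimal value and a maximizer of the four-index problem. -/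
def IsGapOpt4 (P : Measure Ω) (X : ℕ → Ω → Vec d) (l1 l2 l1' l2' : Fin d)
    (sv : ℝ) (γ : Vec d) : Prop :=
  GapFeas4 P X l1 l2 l1' l2' γ ∧ γ l1' + γ l2' = sv ∧
    ∀ θ, GapFeas4 P X l1 l2 l1' l2' θ → θ l1' + θ l2' ≤ sv

/-- The singleton swap `A = ([m] \ {k}) ∪ {k'}` of `G_m^1`. -/
def GapSwap (d m : ℕ) (k k' : Fin d) : Finset (Fin d) := insert k' (Im d m \ {k})

/-- `min_{A ∈ G_m^1} r_A`. -/
def rG1 (P : Measure Ω) (X : ℕ → Ω → Vec d) (m : ℕ) : ℝ≥0∞ :=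
  ⨅ (k : Fin d) (_ : (k : ℕ) < m) (k' : Fin d) (_ : m ≤ (k' : ℕ)),
    rOf P X (WGap (GapSwap d m k k'))

/-- `r_* = min_{A ∈ G_m^-} r_A`. -/
def rStarGap (P : Measure Ω) (X : ℕ → Ω → Vec d) (m : ℕ) : ℝ≥0∞ :=
  ⨅ (A : Finset (Fin d)) (_ : A.card = m ∧ A ≠ Im d m), rOf P X (WGap A)

/-!
If `θ` sums to zero, is nonnegative on `A` and nonpositive off `A`, then for every `x` with
`x k - x k' ≥ 1` across the gap, `θ·x ≥ θ·((min_A x) 1_A + (max_{Aᶜ} x) 1_{Aᶜ}) ≥ ∑_{k ∈ A} θ k`;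
so every feasible `θ` bounds `I` on `W^A`, and `V_γ` on `cl W^A`, from below by its objective
value. Conversely, the half-space `{v : β^A·v ≥ r_A}` contains `W^A`, hence its recession
directions `e_k` (`k ∈ A`), `-e_{k'}` (`k' ∉ A`) and `±(1, …, 1)`: this makes `β^A` feasible,
and testing it at `s 1_A` with `s ↓ 1` gives `r_A ≤ ∑_{k ∈ A} β^A_k`.
-/

def GapBalanced (A : Finset (Fin d)) (θ : Vec d) : Prop :=
  ∑ i, θ i = 0 ∧ (∀ k ∈ A, 0 ≤ θ k) ∧ ∀ k ∉ A, θ k ≤ 0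

def twoLevel (A : Finset (Fin d)) (a b : ℝ) : Vec d :=
  WithLp.toLp 2 fun k => if k ∈ A then a else b

@[simp]
lemma twoLevel_apply (A : Finset (Fin d)) (a b : ℝ) (k : Fin d) :
    twoLevel A a b k = if k ∈ A then a else b :=
  rfl

lemma inner_twoLevel (A : Finset (Fin d)) (a b : ℝ) (θ : Vec d) :
    ⟪θ, twoLevel A a b⟫ = a * ∑ k ∈ A, θ k + b * ∑ k ∈ Aᶜ, θ k := by
  simp only [PiLp.inner_apply, twoLevel_apply, RCLike.inner_apply, conj_trivial]
  rw [← Finset.sum_add_sum_compl A, Finset.mul_sum, Finset.mul_sum]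
  congr 1 <;> refine Finset.sum_congr rfl fun k hk => ?_
  · rw [if_pos hk, mul_comm]
  · rw [if_neg (Finset.mem_compl.1 hk), mul_comm]

lemma twoLevel_mem_wGap {A : Finset (Fin d)} {a b : ℝ} (h : 1 < a - b) :
    twoLevel A a b ∈ WGap A := by
  intro k hk k' hk'
  simpa [hk, hk'] using h

lemma add_smul_mem_wGap {A : Finset (Fin d)} {x u : Vec d} (hx : x ∈ WGap A)
    (hu : ∀ k ∈ A, ∀ k' ∉ A, u k' ≤ u k) {t : ℝ} (ht : 0 ≤ t) : x + t • u ∈ WGap A := by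
  intro k hk k' hk'
  simp only [PiLp.add_apply, PiLp.smul_apply, smul_eq_mul]
  nlinarith [hx k hk k' hk', mul_le_mul_of_nonneg_left (hu k hk k' hk') ht]

lemma closure_wGap_subset (A : Finset (Fin d)) :
    closure (WGap A) ⊆ {x | ∀ k ∈ A, ∀ k' ∉ A, 1 ≤ x k - x k'} := by
  refine closure_minimal (fun x hx k hk k' hk' => (hx k hk k' hk').le) ?_
  simp only [Set.ofPred_forall]
  exact isClosed_biInter fun k _ => isClosed_biInter fun k' _ =>
    isClosed_le continuous_const (by fun_prop)

lemma nonneg_of_forall_le_add_mul {r c s : ℝ} (h : ∀ t : ℝ, 0 ≤ t → r ≤ c + t * s) : 0 ≤ s := by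
  by_contra! hs
  have := h ((c - r + 1) / -s) (div_nonneg (by linarith [h 0 le_rfl]) (by linarith))
  rw [div_mul_eq_mul_div, div_neg, mul_div_assoc, div_self hs.ne, mul_one] at this
  linarith

section GapBalanced

variable {A : Finset (Fin d)}

lemma GapBalanced.sum_compl {θ : Vec d} (hθ : GapBalanced A θ) :
    ∑ k ∈ Aᶜ, θ k = -∑ k ∈ A, θ k := by
  linarith [hθ.1, Finset.sum_add_sum_compl A fun k => θ k]

lemma GapBalanced.mul_sum_le_inner {θ x : Vec d} (hθ : GapBalanced A θ) (hA : A.Nonempty)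
    (hAc : Aᶜ.Nonempty) {c : ℝ} (hx : ∀ k ∈ A, ∀ k' ∉ A, c ≤ x k - x k') :
    c * ∑ k ∈ A, θ k ≤ ⟪θ, x⟫ := by
  obtain ⟨k₀, hk₀, hka⟩ := A.exists_mem_eq_inf' hA fun k => x k
  obtain ⟨k₁, hk₁, hkb⟩ := Aᶜ.exists_mem_eq_sup' hAc fun k => x k
  set a := A.inf' hA fun k => x k
  set b := Aᶜ.sup' hAc fun k => x k
  have hab : c ≤ a - b := hka ▸ hkb ▸ hx k₀ hk₀ k₁ (Finset.mem_compl.1 hk₁)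
  have hcoord : ∀ k, θ k * twoLevel A a b k ≤ θ k * x k := by
    intro k
    by_cases hk : k ∈ A
    · simpa [hk] using mul_le_mul_of_nonneg_left (Finset.inf'_le _ hk) (hθ.2.1 k hk)
    · simpa [hk] using mul_le_mul_of_nonpos_left
        (Finset.le_sup' (fun k => x k) (Finset.mem_compl.2 hk)) (hθ.2.2 k hk)
  calc c * ∑ k ∈ A, θ k ≤ (a - b) * ∑ k ∈ A, θ k :=
        mul_le_mul_of_nonneg_right hab (Finset.sum_nonneg hθ.2.1)
    _ = ⟪θ, twoLevel A a b⟫ := by rw [inner_twoLevel, hθ.sum_compl]; ring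
    _ ≤ ⟪θ, x⟫ := by
        simp only [PiLp.inner_apply, RCLike.inner_apply, conj_trivial]
        exact Finset.sum_le_sum fun k _ => by rw [mul_comm, mul_comm (x k)]; exact hcoord k

end GapBalanced

section HalfSpace

variable {A : Finset (Fin d)} {β : Vec d} {r : ℝ}

lemma inner_nonneg_of_forall_wGap_le (hβ : ∀ v ∈ WGap A, r ≤ ⟪β, v⟫) {u : Vec d}
    (hu : ∀ k ∈ A, ∀ k' ∉ A, u k' ≤ u k) : 0 ≤ ⟪β, u⟫ := by
  have hx : twoLevel A 2 0 ∈ WGap A := twoLevel_mem_wGap (by norm_num)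
  refine nonneg_of_forall_le_add_mul (r := r) (c := ⟪β, twoLevel A 2 0⟫) fun t ht => ?_
  simpa [inner_add_right, real_inner_smul_right] using hβ _ (add_smul_mem_wGap hx hu ht)

lemma gapBalanced_of_forall_wGap_le (hβ : ∀ v ∈ WGap A, r ≤ ⟪β, v⟫) : GapBalanced A β := by
  refine ⟨?_, fun k hk => ?_, fun k hk => ?_⟩
  · have hup := inner_nonneg_of_forall_wGap_le hβ (u := twoLevel A 1 1) (by simp)
    have hdown := inner_nonneg_of_forall_wGap_le hβ (u := twoLevel A (-1) (-1)) (by simp)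
    rw [inner_twoLevel] at hup hdown
    linarith [Finset.sum_add_sum_compl A fun k => β k]
  · have h := inner_nonneg_of_forall_wGap_le hβ (u := EuclideanSpace.single k 1)
      fun j _ j' hj' => by
      simp [show j' ≠ k from fun h => hj' (h ▸ hk)]; split_ifs <;> norm_num
    simpa [EuclideanSpace.inner_single_right] using h
  · have h := inner_nonneg_of_forall_wGap_le hβ (u := EuclideanSpace.single k (-1))
      fun j hj _ _ => by
      simp [show j ≠ k from fun h => hk (h ▸ hj)]; split_ifs <;> norm_num
    simpa [EuclideanSpace.inner_single_right] using h

lemma le_sum_of_forall_wGap_le (hβ : ∀ v ∈ WGap A, r ≤ ⟪β, v⟫) (hβA : ∀ k ∈ A, 0 ≤ β k) :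
    r ≤ ∑ k ∈ A, β k :=
  (le_iff_forall_one_lt_le_mul₀ (Finset.sum_nonneg hβA)).2 fun s hs => by
    simpa [inner_twoLevel, mul_comm] using hβ _ (twoLevel_mem_wGap (a := s) (b := 0) (by linarith))

end HalfSpace

section RateBounds

variable {P : Measure Ω} {X : ℕ → Ω → Vec d}

lemma ofReal_inner_le_rate {θ : Vec d} (hθ : InDom P X θ) (hΛ : cgf P X θ ≤ 0) (x : Vec d) :
    ENNReal.ofReal ⟪θ, x⟫ ≤ rate P X x :=
  le_iSup₂ (f := fun θ (_ : θ ∈ {θ | InDom P X θ ∧ cgf P X θ ≤ 0}) => ENNReal.ofReal ⟪θ, x⟫)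
    θ ⟨hθ, hΛ⟩

lemma coe_inner_le_vfun {γ θ : Vec d} (hγ : InDom P X γ) (hθ : InDom P X (θ - γ))
    (hΛ : cgf P X γ + cgf P X (θ - γ) ≤ 0) (x : Vec d) :
    ((⟪θ, x⟫ : ℝ) : EReal) ≤ Vfun P X γ x :=
  le_iSup₂ (f := fun α (_ : α ∈ {α | InDom P X γ ∧ InDom P X (α - γ) ∧
    cgf P X γ + cgf P X (α - γ) ≤ 0}) => ((⟪α, x⟫ : ℝ) : EReal)) θ ⟨hγ, hθ, hΛ⟩

lemma IsOptTilt.rOf_ne_top {W : Set (Vec d)} {β v : Vec d} (h : IsOptTilt P X W β)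
    (hv : v ∈ W) : rOf P X W ≠ ⊤ := by
  intro htop
  have hle := h.2.2.1 v hv
  rw [htop, EReal.coe_ennreal_top, top_le_iff] at hle
  exact EReal.coe_ne_top _ hle

lemma IsOptTilt.toReal_rOf_le_inner {W : Set (Vec d)} {β v : Vec d} (h : IsOptTilt P X W β)
    (hv : v ∈ W) : (rOf P X W).toReal ≤ ⟪β, v⟫ := by
  have hle := h.2.2.1 v hv
  rwa [← EReal.coe_ennreal_toReal (h.rOf_ne_top hv), EReal.coe_le_coe_iff] at hle

variable {A : Finset (Fin d)} (hA : A.Nonempty) (hAc : Aᶜ.Nonempty)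
include hA hAc

lemma ofReal_sum_le_rOf_wGap {θ : Vec d} (hθ : GapFeas P X A θ) :
    ENNReal.ofReal (∑ k ∈ A, θ k) ≤ rOf P X (WGap A) := by
  obtain ⟨hdom, hΛ, hbal⟩ := hθ
  refine le_iInf₂ fun x hx => le_trans ?_ (ofReal_inner_le_rate hdom hΛ x)
  refine ENNReal.ofReal_le_ofReal ?_
  simpa using GapBalanced.mul_sum_le_inner hbal hA hAc fun k hk k' hk' => (hx k hk k' hk').le

lemma coe_ofReal_sum_le_vOf_wGap {γ θ : Vec d} (hγ : InDom P X γ) (hγΛ : cgf P X γ ≤ 0)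
    (hθ : InDom P X (θ - γ)) (hθΛ : cgf P X (θ - γ) ≤ 0) (hbal : GapBalanced A θ) :
    ((ENNReal.ofReal (∑ k ∈ A, θ k) : ℝ≥0∞) : EReal) ≤ vOf P X (WGap A) γ := by
  refine le_iInf₂ fun x hx => le_trans ?_ (coe_inner_le_vfun hγ hθ (add_nonpos hγΛ hθΛ) x)
  rw [EReal.coe_ennreal_ofReal, max_eq_left (Finset.sum_nonneg hbal.2.1), EReal.coe_le_coe_iff]
  simpa using hbal.mul_sum_le_inner hA hAc (closure_wGap_subset A hx)

end RateBounds

theorem statement11_general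
    {d : ℕ} {Ω : Type*} [MeasurableSpace Ω] (P : Measure Ω) (X : ℕ → Ω → Vec d)
    (m : ℕ) (hG : GapSetting P X m)
    (A : Finset (Fin d)) (hAcard : A.card = m)
    (βA : Vec d) (hβA : IsOptTilt P X (WGap A) βA) :
    -- (i) `r_A` and `β^A` are the optimal value and an optimal solution
    ((∀ θ : Vec d, GapFeas P X A θ →
        ENNReal.ofReal (∑ k ∈ A, θ k) ≤ rOf P X (WGap A)) ∧
      GapFeas P X A βA ∧
      ENNReal.ofReal (∑ k ∈ A, βA k) = rOf P X (WGap A)) ∧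
    -- (ii) lower bound on `v_A(γ)`
    (∀ γ : Vec d, InDom P X γ → cgf P X γ ≤ 0 →
      ∀ θ : Vec d, InDom P X (θ - γ) → cgf P X (θ - γ) ≤ 0 →
        (∑ i : Fin d, θ i) = 0 → (∀ k ∈ A, 0 ≤ θ k) → (∀ k ∉ A, θ k ≤ 0) →
        ((ENNReal.ofReal (∑ k ∈ A, θ k) : ℝ≥0∞) : EReal) ≤ vOf P X (WGap A) γ) := by
  obtain ⟨-, hm, hmd, -⟩ := hG
  have hA : A.Nonempty := Finset.card_pos.1 (by omega)
  have hAc : Aᶜ.Nonempty := Finset.card_pos.1 (by rw [Finset.card_compl, Fintype.card_fin]; omega)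
  have hβW : ∀ v ∈ WGap A, (rOf P X (WGap A)).toReal ≤ ⟪βA, v⟫ :=
    fun v hv => hβA.toReal_rOf_le_inner hv
  have hβbal := gapBalanced_of_forall_wGap_le hβW
  have hβfeas : GapFeas P X A βA := ⟨hβA.1, hβA.2.1.le, hβbal⟩
  have hmem : twoLevel A 2 0 ∈ WGap A := twoLevel_mem_wGap (by norm_num)
  refine ⟨⟨fun θ hθ => ofReal_sum_le_rOf_wGap hA hAc hθ, hβfeas,
    (ofReal_sum_le_rOf_wGap hA hAc hβfeas).antisymm ?_⟩,
    fun γ hγ hγΛ θ hθ hθΛ hsum hpos hneg =>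
      coe_ofReal_sum_le_vOf_wGap hA hAc hγ hγΛ hθ hθΛ ⟨hsum, hpos, hneg⟩⟩
  rw [ENNReal.le_ofReal_iff_toReal_le (hβA.rOf_ne_top hmem) (Finset.sum_nonneg hβbal.2.1)]
  exact le_sum_of_forall_wGap_le hβW hβbal.2.1

theorem statement11
    {d : ℕ} {Ω : Type*} [MeasurableSpace Ω] (P : Measure Ω) (X : ℕ → Ω → Vec d)
    (m : ℕ) (hG : GapSetting P X m)
    (A : Finset (Fin d)) (hAcard : A.card = m) (hAne : A ≠ Im d m)
    (βA : Vec d) (hβA : IsOptTilt P X (WGap A) βA) :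
    -- (i) `r_A` and `β^A` are the optimal value and an optimal solution
    ((∀ θ : Vec d, GapFeas P X A θ →
        ENNReal.ofReal (∑ k ∈ A, θ k) ≤ rOf P X (WGap A)) ∧
      GapFeas P X A βA ∧
      ENNReal.ofReal (∑ k ∈ A, βA k) = rOf P X (WGap A)) ∧
    -- (ii) lower bound on `v_A(γ)`
    (∀ γ : Vec d, InDom P X γ → cgf P X γ ≤ 0 →
      ∀ θ : Vec d, InDom P X (θ - γ) → cgf P X (θ - γ) ≤ 0 →
        (∑ i : Fin d, θ i) = 0 → (∀ k ∈ A, 0 ≤ θ k) → (∀ k ∉ A, θ k ≤ 0) →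
        ((ENNReal.ofReal (∑ k ∈ A, θ k) : ℝ≥0∞) : EReal) ≤ vOf P X (WGap A) γ) :=
  statement11_general P X m hG A hAcard βA hβA

end Paper
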